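/- arXiv:1611.08876 — 3 statements merged into one kernel-verified Lean document; each statement's English description precedes it below -/
import Mathlib

section
/- Define formal power series over ℚ: I0(t) = ∑_{d≥0} (∏_{j=1}^{d} (5j−4))^5 / (5^{5d}·(5d)!) · t^{5d} and I1(t) = ∑_{d≥0} (∏_{j=1}^{d} (5j−3))^5 / (5^{5d}·(5d+1)!) · t^{5d+1}. Then, with ' denoting d/dt, the following identity holds in ℚ[[t]]: (5^5 − t^5)·t·(I1'''·I0 − I1·I0''' − I1''·I0' + I1'·I0'') = 5·t^4·( t·(I1''·I0 − I1·I0'') + I1'·I0 − I1·I0' ). -/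
/-!
Both `I0` and `I1` solve the Picard–Fuchs equation `X (θ + 1)⁴ f = 5⁵ f⁗` of the quintic,
`θ = X d⁄dX`: in coefficients this is the recurrence `(n + 1)⁴ aₙ = 5⁵ (n + 2) ⋯ (n + 5) aₙ₊₅`,
i.e. the ratio of consecutive terms of the hypergeometric sums. For any two solutions `f, g`,
the difference `h` of the two sides of the identity satisfies `X h' = h` (a Wronskian-type
computation that uses the equation for `f` and `g` once each), so `h` is a multiple of `X`.
Its coefficient of `X` is a combination of products of a coefficient of `I1` and one of `I0`
in degrees below four, all of which vanish because `I1` and `I0` live in degrees `1` and `0`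
mod `5`.
-/

open PowerSeries

/-- The series `I0` of the FJRW I-function of the quintic. -/
noncomputable def fjrwI0 : PowerSeries ℚ :=
  PowerSeries.mk fun n =>
    if n % 5 = 0 then
      ((∏ j ∈ Finset.range (n / 5), (5 * (j : ℚ) + 1)) ^ 5) / (5 ^ n * n.factorial)
    else 0

/-- The series `I1` of the FJRW I-function of the quintic. -/
noncomputable def fjrwI1 : PowerSeries ℚ :=
  PowerSeries.mk fun n =>
    if n % 5 = 1 then
      ((∏ j ∈ Finset.range (n / 5), (5 * (j : ℚ) + 2)) ^ 5) / (5 ^ (n - 1) * n.factorial)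
    else 0

noncomputable def psD : PowerSeries ℚ → PowerSeries ℚ := fun f => PowerSeries.derivative ℚ f

namespace PowerSeries

section CommRing

variable {R : Type*} [CommRing R]

theorem derivative_ofNat (n : ℕ) [n.AtLeastTwo] :
    d⁄dX R (no_index (OfNat.ofNat n : R⟦X⟧)) = 0 := by
  exact_mod_cast (d⁄dX R).map_natCast n

theorem derivative_X_mul_iterate_four (f : R⟦X⟧) :
    d⁄dX R (X * d⁄dX R (X * d⁄dX R (X * d⁄dX R (X * f)))) =
      f + 15 * X * d⁄dX R f + 25 * X ^ 2 * d⁄dX R (d⁄dX R f)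
        + 10 * X ^ 3 * d⁄dX R (d⁄dX R (d⁄dX R f))
        + X ^ 4 * d⁄dX R (d⁄dX R (d⁄dX R (d⁄dX R f))) := by
  simp only [Derivation.leibniz, derivative_X, derivative_one, map_zero, smul_eq_mul, map_add]
  ring

/-- The Picard–Fuchs equation `X (θ + 1)⁴ f = c f⁗` of the quintic, with `θ = X d⁄dX`,
written out in powers of `d⁄dX`. -/
def SolvesQuinticPicardFuchs (c : R) (f : R⟦X⟧) : Prop :=
  X * f + 15 * X ^ 2 * d⁄dX R f + 25 * X ^ 3 * d⁄dX R (d⁄dX R f)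
      + 10 * X ^ 4 * d⁄dX R (d⁄dX R (d⁄dX R f))
      + X ^ 5 * d⁄dX R (d⁄dX R (d⁄dX R (d⁄dX R f))) =
    C c * d⁄dX R (d⁄dX R (d⁄dX R (d⁄dX R f)))

theorem solvesQuinticPicardFuchs_of_coeff {c : R} {f : R⟦X⟧} (h4 : coeff 4 f = 0)
    (hrec : ∀ n : ℕ, ((n : R) + 1) ^ 4 * coeff n f =
      c * (((n : R) + 2) * (n + 3) * (n + 4) * (n + 5)) * coeff (n + 5) f) :
    SolvesQuinticPicardFuchs c f := by
  have hE : X * d⁄dX R (X * d⁄dX R (X * d⁄dX R (X * d⁄dX R (X * f)))) =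
      C c * d⁄dX R (d⁄dX R (d⁄dX R (d⁄dX R f))) := by
    ext (_ | n)
    · simp [coeff_derivative, h4]
    · simp only [coeff_succ_X_mul, coeff_C_mul, coeff_derivative]
      push_cast
      linear_combination hrec n
  rw [SolvesQuinticPicardFuchs, ← hE, derivative_X_mul_iterate_four]
  ring

noncomputable def quinticDefect (c : R) (f g : R⟦X⟧) : R⟦X⟧ :=
  (C c - X ^ 5) * X *
      (d⁄dX R (d⁄dX R (d⁄dX R f)) * g - f * d⁄dX R (d⁄dX R (d⁄dX R g))
        - d⁄dX R (d⁄dX R f) * d⁄dX R g + d⁄dX R f * d⁄dX R (d⁄dX R g)) -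
    5 * X ^ 4 *
      (X * (d⁄dX R (d⁄dX R f) * g - f * d⁄dX R (d⁄dX R g)) + d⁄dX R f * g - f * d⁄dX R g)

theorem X_mul_derivative_quinticDefect {c : R} {f g : R⟦X⟧}
    (hf : SolvesQuinticPicardFuchs c f) (hg : SolvesQuinticPicardFuchs c g) :
    X * d⁄dX R (quinticDefect c f g) = quinticDefect c f g := by
  unfold SolvesQuinticPicardFuchs at hf hg
  simp only [quinticDefect, map_sub, map_add, Derivation.leibniz, Derivation.leibniz_pow,
    derivative_X, derivative_C, derivative_ofNat, smul_eq_mul, nsmul_eq_mul]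
  push_cast
  linear_combination (X ^ 2 * f) * hg - (X ^ 2 * g) * hf

theorem coeff_one_quinticDefect (c : R) (f g : R⟦X⟧) :
    coeff 1 (quinticDefect c f g) =
      c * (6 * coeff 3 f * coeff 0 g - 6 * coeff 0 f * coeff 3 g
        - 2 * coeff 2 f * coeff 1 g + 2 * coeff 1 f * coeff 2 g) := by
  set P := d⁄dX R (d⁄dX R (d⁄dX R f)) * g - f * d⁄dX R (d⁄dX R (d⁄dX R g))
    - d⁄dX R (d⁄dX R f) * d⁄dX R g + d⁄dX R f * d⁄dX R (d⁄dX R g) with hP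
  set S := X * (d⁄dX R (d⁄dX R f) * g - f * d⁄dX R (d⁄dX R g)) + d⁄dX R f * g - f * d⁄dX R g
  have hX : quinticDefect c f g = X * ((C c - X ^ 5) * P - X ^ 3 * (5 * S)) := by
    rw [quinticDefect]
    ring
  rw [hX, coeff_succ_X_mul, coeff_zero_eq_constantCoeff_apply]
  simp only [hP, map_sub, map_add, map_mul, map_pow, constantCoeff_C, constantCoeff_X]
  simp only [← coeff_zero_eq_constantCoeff_apply, coeff_derivative]
  ring

end CommRing

theorem eq_zero_of_X_mul_derivative_eq_self {R : Type*} [CommRing R] [IsDomain R] [CharZero R]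
    {h : R⟦X⟧} (hX : X * d⁄dX R h = h) (h1 : coeff 1 h = 0) : h = 0 := by
  ext (_ | _ | n)
  · simpa using (congrArg (coeff 0) hX).symm
  · simpa using h1
  · have hn := congrArg (coeff (n + 2)) hX
    rw [coeff_succ_X_mul, coeff_derivative] at hn
    have hn' : ((n : R) + 1) * coeff (n + 2) h = 0 := by
      push_cast at hn
      linear_combination hn
    exact (mul_eq_zero.mp hn').resolve_left (Nat.cast_add_one_ne_zero n)

end PowerSeries

open Nat in
noncomputable def quinticSeries (r : ℕ) : ℚ⟦X⟧ :=
  mk fun n => if n % 5 = r then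
    (∏ j ∈ Finset.range (n / 5), ((5 * j + r + 1 : ℕ) : ℚ)) ^ 5 / (5 ^ (n - r) * n !) else 0

theorem fjrwI0_eq : fjrwI0 = quinticSeries 0 := by
  ext n
  simp [quinticSeries, fjrwI0]

theorem fjrwI1_eq : fjrwI1 = quinticSeries 1 := by
  ext n
  simp [quinticSeries, fjrwI1, add_assoc, one_add_one_eq_two]

theorem coeff_quinticSeries_of_mod_ne {r n : ℕ} (h : n % 5 ≠ r) :
    coeff n (quinticSeries r) = 0 := by
  simp [quinticSeries, h]

theorem coeff_quinticSeries_recurrence (r n : ℕ) :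
    ((n : ℚ) + 1) ^ 4 * coeff n (quinticSeries r) =
      5 ^ 5 * (((n : ℚ) + 2) * (n + 3) * (n + 4) * (n + 5)) * coeff (n + 5) (quinticSeries r) := by
  simp only [quinticSeries, coeff_mk, Nat.add_mod_right]
  split_ifs with h
  · obtain ⟨q, rfl⟩ : ∃ q, n = 5 * q + r := ⟨n / 5, by omega⟩
    rw [show (5 * q + r + 5) / 5 = q + 1 by omega, show (5 * q + r) / 5 = q by omega,
      Finset.prod_range_succ, show 5 * q + r + 5 - r = 5 * q + 5 by omega,
      show 5 * q + r - r = 5 * q by omega, pow_add]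
    simp only [Nat.factorial_succ]
    field_simp
    push_cast
    ring
  · simp

theorem solvesQuinticPicardFuchs_quinticSeries {r : ℕ} (hr : r < 4) :
    SolvesQuinticPicardFuchs (5 ^ 5) (quinticSeries r) :=
  solvesQuinticPicardFuchs_of_coeff (coeff_quinticSeries_of_mod_ne (by omega))
    (coeff_quinticSeries_recurrence r)

theorem stmt_6 :
    ((5 ^ 5 : PowerSeries ℚ) - PowerSeries.X ^ 5) * PowerSeries.X *
        (psD (psD (psD fjrwI1)) * fjrwI0 - fjrwI1 * psD (psD (psD fjrwI0))
          - psD (psD fjrwI1) * psD fjrwI0 + psD fjrwI1 * psD (psD fjrwI0)) =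
      5 * PowerSeries.X ^ 4 *
        (PowerSeries.X * (psD (psD fjrwI1) * fjrwI0 - fjrwI1 * psD (psD fjrwI0))
          + psD fjrwI1 * fjrwI0 - fjrwI1 * psD fjrwI0) := by
  have hdefect : quinticDefect (5 ^ 5) fjrwI1 fjrwI0 = 0 := by
    rw [fjrwI0_eq, fjrwI1_eq]
    refine eq_zero_of_X_mul_derivative_eq_self (X_mul_derivative_quinticDefect
      (solvesQuinticPicardFuchs_quinticSeries (by norm_num))
      (solvesQuinticPicardFuchs_quinticSeries (by norm_num))) ?_
    simp [coeff_one_quinticDefect, coeff_quinticSeries_of_mod_ne]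
  rwa [quinticDefect, sub_eq_zero, map_pow, map_ofNat] at hdefect
end

section
/- Let R be a commutative ring with a derivation D : R → R. Let F ∈ R be invertible, let G, A ∈ R, and let C_0, C_1, ..., C_5 ∈ R satisfy ∑_{r=0}^{5} C_r · D^r F = 0 and ∑_{r=0}^{5} C_r · D^r G = A. Define G1 := D(G·F^{−1}) and, for s = 0, ..., 4, C1_s := ∑_{r=s+1}^{5} C(r, s+1) · C_r · D^{r−1−s} F, where C(r,s+1) is a binomial coefficient. Then ∑_{s=0}^{4} C1_s · D^s G1 = A. -/
/-!
Write `G = H * F` with `H = G * Fi`. By the general Leibniz rule, applying `L = ∑ C r * D^[r]` to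
`H * F` gives `H * L F` plus the terms in which at least one derivative falls on `H`; regrouping
those by the number `s + 1` of such derivatives gives `∑ C1 s * D^[s] (D H)`. Since `L F = 0`,
`L G = A` and `D H = G1`, this is the claim.
-/

open Finset

namespace Derivation

variable {A R : Type*} [CommSemiring A] [CommSemiring R] [Algebra A R] (D : Derivation A R R)

theorem iterate_apply_mul (n : ℕ) (a b : R) :
    D^[n] (a * b) = ∑ ij ∈ antidiagonal n, n.choose ij.1 • (D^[ij.1] a * D^[ij.2] b) := by
  induction n with
  | zero => simp
  | succ n ih =>
    rw [sum_antidiagonal_choose_succ_nsmul (fun i j => D^[i] a * D^[j] b) n]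
    simp only [Function.iterate_succ_apply', ih, map_sum, map_nsmul, leibniz, smul_eq_mul,
      smul_add, sum_add_distrib]
    congr 1
    refine sum_congr rfl fun ⟨i, j⟩ hij ↦ ?_
    rw [n.choose_symm_of_eq_add (mem_antidiagonal.1 hij).symm]
    ring

theorem iterate_apply_mul' (n : ℕ) (a b : R) :
    D^[n] (a * b) = ∑ k ∈ range (n + 1), (n.choose k : R) * D^[k] a * D^[n - k] b := by
  rw [iterate_apply_mul, Nat.sum_antidiagonal_eq_sum_range_succ
    (fun i j ↦ n.choose i • (D^[i] a * D^[j] b))]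
  simp only [nsmul_eq_mul, mul_assoc]

theorem sum_mul_iterate_apply_mul (n : ℕ) (C : ℕ → R) (F H : R) :
    ∑ r ∈ range (n + 1), C r * D^[r] (H * F) =
      H * ∑ r ∈ range (n + 1), C r * D^[r] F +
        ∑ s ∈ range n, (∑ r ∈ Icc (s + 1) n, (r.choose (s + 1) : R) * C r * D^[r - 1 - s] F) *
          D^[s] (D H) := by
  have hsplit : ∀ r, C r * D^[r] (H * F) = H * (C r * D^[r] F) +
      ∑ s ∈ range r, (r.choose (s + 1) : R) * C r * D^[r - 1 - s] F * D^[s] (D H) := by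
    intro r
    rw [iterate_apply_mul', sum_range_succ', mul_add, mul_sum, add_comm]
    simp only [Function.iterate_succ_apply, Nat.choose_zero_right, Nat.sub_zero, Nat.cast_one,
      Function.iterate_zero_apply, Nat.sub_sub, add_comm 1]
    congr 1
    · ring
    · exact sum_congr rfl fun _ _ ↦ by ring
  simp only [hsplit, sum_add_distrib, mul_sum, sum_mul]
  congr 1
  exact sum_comm' fun r s ↦ by simp only [mem_range, mem_Icc]; omega

end Derivation

theorem stmt_11 (R : Type*) [CommRing R] (D : R → R)
    (hDadd : ∀ x y : R, D (x + y) = D x + D y)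
    (hDmul : ∀ x y : R, D (x * y) = D x * y + x * D y)
    (F Fi G A : R) (hF : F * Fi = 1) (C : ℕ → R)
    (hhom : ∑ r ∈ Finset.range 6, C r * D^[r] F = 0)
    (hinhom : ∑ r ∈ Finset.range 6, C r * D^[r] G = A)
    (G1 : R) (hG1 : G1 = D (G * Fi))
    (C1 : ℕ → R)
    (hC1 : ∀ s : ℕ, C1 s = ∑ r ∈ Finset.Icc (s + 1) 5, (r.choose (s + 1) : R) * C r * D^[r - 1 - s] F) :
    ∑ s ∈ Finset.range 5, C1 s * D^[s] G1 = A := by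
  let D' : Derivation ℤ R R := .mk' (AddMonoidHom.mk' D hDadd).toIntLinearMap fun x y ↦ by
    simp only [AddMonoidHom.coe_toIntLinearMap, AddMonoidHom.mk'_apply, hDmul, smul_eq_mul]
    ring
  have hD' : ⇑D' = D := rfl
  have hG : G = G * Fi * F := by rw [mul_assoc, mul_comm Fi, hF, mul_one]
  have hreduce := D'.sum_mul_iterate_apply_mul 5 C F (G * Fi)
  rw [hD', ← hG, hinhom, hhom, mul_zero, zero_add] at hreduce
  simp only [hC1, hG1, hreduce]
end

section
/- Let I0(t) = ∑_{d≥0} (∏_{j=1}^{d}(5j−4))^5 / (5^{5d}·(5d)!) · t^{5d} ∈ ℚ[[t]], and let D := t·d/dt be the Euler derivation on ℚ[[t]]. Then y := t·I0(t) satisfies the Picard–Fuchs equation t^5 · D^5 y = 5^5 · (D−1)(D−2)(D−3)(D−4)(D−5) y. -/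
open PowerSeries

/-- The Euler derivation `D = t d/dt` on `ℚ⟦t⟧`. -/
noncomputable def eulerD : PowerSeries ℚ → PowerSeries ℚ :=
  fun f => PowerSeries.X * PowerSeries.derivative ℚ f

/-- The operator `D - k`. -/
noncomputable def eulerE (k : ℚ) : PowerSeries ℚ → PowerSeries ℚ :=
  fun f => eulerD f - PowerSeries.C (R := ℚ) k * f

/-!
`D` acts on `t ^ n` as multiplication by `n`, so both sides of the equation are computed
coefficientwise. Comparing coefficients of `t ^ (k + 6)` reduces the equation to the recurrence
`(5d+1)^5 a_d = 5^5 (5d+1)(5d+2)(5d+3)(5d+4)(5d+5) a_{d+1}` for the coefficient `a_d` of `t ^ (5d)`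
in `I0`, which is read off from its closed form.
-/

lemma coeff_eulerD (f : ℚ⟦X⟧) (n : ℕ) : coeff n (eulerD f) = n * coeff n f := by
  cases n with
  | zero => simp [eulerD]
  | succ n =>
    rw [eulerD, coeff_succ_X_mul, coeff_derivative]
    push_cast
    ring

lemma coeff_iterate_eulerD (k : ℕ) (f : ℚ⟦X⟧) (n : ℕ) :
    coeff n (eulerD^[k] f) = (n : ℚ) ^ k * coeff n f := by
  induction k generalizing f with
  | zero => simp
  | succ k ih => rw [Function.iterate_succ_apply, ih, coeff_eulerD, pow_succ, mul_assoc]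

lemma coeff_eulerE (k : ℚ) (f : ℚ⟦X⟧) (n : ℕ) :
    coeff n (eulerE k f) = (n - k) * coeff n f := by
  rw [eulerE, map_sub, coeff_eulerD, coeff_C_mul, sub_mul]

lemma coeff_fjrwI0_of_not_dvd {n : ℕ} (hn : ¬ 5 ∣ n) : coeff n fjrwI0 = 0 := by
  rw [fjrwI0, coeff_mk, if_neg (by omega)]

lemma coeff_fjrwI0_five_mul (d : ℕ) :
    coeff (5 * d) fjrwI0 =
      (∏ j ∈ Finset.range d, (5 * (j : ℚ) + 1)) ^ 5 / (5 ^ (5 * d) * (5 * d).factorial) := by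
  rw [fjrwI0, coeff_mk, if_pos (by omega), Nat.mul_div_cancel_left d (by norm_num)]

lemma coeff_fjrwI0_five_mul_add_five (d : ℕ) :
    5 ^ 5 * ((5 * d + 1) * (5 * d + 2) * (5 * d + 3) * (5 * d + 4) * (5 * d + 5)) *
        coeff (5 * d + 5) fjrwI0 = (5 * d + 1 : ℚ) ^ 5 * coeff (5 * d) fjrwI0 := by
  rw [show 5 * d + 5 = 5 * (d + 1) by ring, coeff_fjrwI0_five_mul, coeff_fjrwI0_five_mul,
    Finset.prod_range_succ, show 5 * (d + 1) = 5 * d + 4 + 1 by ring]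
  simp only [Nat.factorial_succ, pow_succ, mul_pow]
  push_cast
  field_simp
  ring

lemma coeff_fjrwI0_add_five (k : ℕ) :
    5 ^ 5 * (((k : ℚ) + 1) * (k + 2) * (k + 3) * (k + 4) * (k + 5)) * coeff (k + 5) fjrwI0 =
      ((k : ℚ) + 1) ^ 5 * coeff k fjrwI0 := by
  by_cases hk : 5 ∣ k
  · obtain ⟨d, rfl⟩ := hk
    exact_mod_cast coeff_fjrwI0_five_mul_add_five d
  · rw [coeff_fjrwI0_of_not_dvd hk, coeff_fjrwI0_of_not_dvd (by omega), mul_zero, mul_zero]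

theorem stmt_12 :
    PowerSeries.X ^ 5 * eulerD^[5] (PowerSeries.X * fjrwI0) =
      5 ^ 5 * eulerE 1 (eulerE 2 (eulerE 3 (eulerE 4 (eulerE 5
        (PowerSeries.X * fjrwI0))))) := by
  ext n
  rw [coeff_X_pow_mul', ← map_ofNat C, ← map_pow, coeff_C_mul]
  simp only [coeff_eulerE, coeff_iterate_eulerD]
  rcases Nat.lt_or_ge n 5 with hn | hn
  · rw [if_neg (by omega)]
    -- one of the factors `n - 1, …, n - 5` vanishes, or `n = 0` and `t * I0` has no constant term
    interval_cases n <;> simp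
  · obtain ⟨m, rfl⟩ := Nat.exists_eq_add_of_le' hn
    rw [if_pos hn, Nat.add_sub_cancel]
    rcases m with _ | k
    · simp
    · rw [coeff_succ_X_mul, add_right_comm, coeff_succ_X_mul]
      push_cast
      linear_combination (coeff_fjrwI0_add_five k).symm
end
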